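/- Fix t > 0, a unitary U ∈ U(m−1), and an integer N ≥ 1. Define φ(v, w) = (e^{−2t}v, e^{−t}Uw) on ℝ × ℂ^{m−1}. Let h(v,w) = Σ c_{α,β} v^α w^β be a real analytic function on a neighborhood O of 0 (with Taylor expansion in real coordinates, where v^α w^β denotes monomials in v and the real/imaginary parts of the components of w), all c_{α,β} real, such that N = min{2α + |β| : c_{α,β} ≠ 0}. Let P(v,w) = Σ_{2α+|β| = N} c_{α,β} v^α w^β. If n_j → ∞ is a sequence with U^{n_j} → Id, then for every (v,w) ∈ ℝ × ℂ^{m−1}, e^{N n_j t} h(φ^{n_j}(v,w)) → P(v,w). -/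

import Mathlib

open Matrix Filter

noncomputable section

/-- Variables for real polynomials/power series on `ℝ × ℂ^k`: `none` corresponds to `v`,
`some (i, true)` to `Re(wᵢ)` and `some (i, false)` to `Im(wᵢ)`. -/
def SVars (k : ℕ) : Type := Option (Fin k × Bool)

instance (k : ℕ) : DecidableEq (SVars k) := by unfold SVars; infer_instance

/-- The weight of a variable: `v` has weight `2`, the real/imaginary parts of the `wᵢ`
have weight `1`. -/
def sWeight {k : ℕ} (s : SVars k) : ℕ := Option.elim s 2 (fun _ => 1)

/-- Weighted degree `2α + |β|` of a monomial `v^α w^β`. -/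
def wdeg {k : ℕ} (d : SVars k →₀ ℕ) : ℕ := d.sum fun s e => sWeight s * e

/-- Evaluation of the variables at a point `(v, w) ∈ ℝ × ℂ^k`. -/
def sEval {k : ℕ} (x : ℝ × EuclideanSpace ℂ (Fin k)) : SVars k → ℝ :=
  fun s => Option.elim s x.1 (fun p => if p.2 then (x.2 p.1).re else (x.2 p.1).im)

/-- The contraction `φ(v, w) = (e^{−2t} v, e^{−t} U w)` on `ℝ × ℂ^{k}`. -/
def phiMap {k : ℕ} (t : ℝ) (U : Matrix (Fin k) (Fin k) ℂ)
    (x : ℝ × EuclideanSpace ℂ (Fin k)) : ℝ × EuclideanSpace ℂ (Fin k) :=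
  (Real.exp (-(2 * t)) * x.1,
    (WithLp.toLp 2 (fun i => Complex.exp (-t) * ∑ j : Fin k, U i j * x.2 j) : EuclideanSpace ℂ (Fin k)))

/-! `φⁿ(v, w)` is the weighted dilation `δ_r(v, w) = (r² v, r w)`, `r = e^{-nt}`, of the rotated
point `y = (v, Uⁿ w)`, and `δ_r` multiplies a monomial of weighted degree `2α + |β|` by
`r^{2α + |β|}`. Along `nⱼ` the points `y` tend to `(v, w)`, so `r^{-N} Q(δ_r y) → P(v, w)`: the
monomials of weighted degree `> N` keep a positive power of `r`. The remainder
`r^{-N} (h - Q)(δ_r y)` is `O(r^{-N} ‖δ_r y‖^{N+1}) = O(r)`, because `‖δ_r y‖ ≤ r ‖y‖` for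
`r ≤ 1`. -/

open MvPolynomial Topology

section Dilation

variable {k : ℕ}

def weightedDilation (r : ℝ) (x : ℝ × EuclideanSpace ℂ (Fin k)) : ℝ × EuclideanSpace ℂ (Fin k) :=
  (r ^ 2 * x.1, r • x.2)

def rotateBy (A : Matrix (Fin k) (Fin k) ℂ) (x : ℝ × EuclideanSpace ℂ (Fin k)) :
    ℝ × EuclideanSpace ℂ (Fin k) :=
  (x.1, WithLp.toLp 2 (A *ᵥ x.2))

lemma sEval_weightedDilation (r : ℝ) (x : ℝ × EuclideanSpace ℂ (Fin k)) (s : SVars k) :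
    sEval (weightedDilation r x) s = r ^ sWeight s * sEval x s := by
  rcases s with _ | ⟨i, _ | _⟩ <;> simp [sEval, sWeight, weightedDilation]

lemma eval_monomial_weightedDilation (r : ℝ) (x : ℝ × EuclideanSpace ℂ (Fin k))
    (d : SVars k →₀ ℕ) (c : ℝ) :
    eval (sEval (weightedDilation r x)) (monomial d c) =
      r ^ wdeg d * eval (sEval x) (monomial d c) := by
  simp only [eval_monomial, sEval_weightedDilation, mul_pow, Finsupp.prod_mul, ← pow_mul]
  rw [wdeg, Finsupp.sum, ← Finset.prod_pow_eq_pow_sum, Finsupp.prod]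
  ring

lemma norm_weightedDilation_le {r : ℝ} (hr₀ : 0 ≤ r) (hr₁ : r ≤ 1)
    (x : ℝ × EuclideanSpace ℂ (Fin k)) : ‖weightedDilation r x‖ ≤ r * ‖x‖ := by
  have hr2 : r ^ 2 ≤ r := by nlinarith
  rw [weightedDilation, Prod.norm_def, Prod.norm_def, mul_max_of_nonneg _ _ hr₀, norm_mul,
    norm_smul, Real.norm_of_nonneg hr₀, Real.norm_of_nonneg (by positivity)]
  gcongr

lemma iterate_phiMap (t : ℝ) (U : Matrix (Fin k) (Fin k) ℂ) (n : ℕ)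
    (x : ℝ × EuclideanSpace ℂ (Fin k)) :
    (phiMap t U)^[n] x = weightedDilation (Real.exp (-t) ^ n) (rotateBy (U ^ n) x) := by
  induction n with
  | zero => simp [weightedDilation, rotateBy]
  | succ n ih =>
    rw [Function.iterate_succ_apply', ih]
    refine Prod.ext ?_ (PiLp.ext fun i => ?_)
    · simp only [phiMap, weightedDilation, rotateBy]
      rw [show -(2 * t) = -t + -t by ring, Real.exp_add]
      ring
    · simp only [phiMap, weightedDilation, rotateBy, PiLp.smul_apply, Complex.real_smul,
        pow_succ', ← Matrix.mulVec_mulVec, Complex.ofReal_mul, Complex.ofReal_pow,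
        Complex.ofReal_exp]
      simp only [Matrix.mulVec, dotProduct, Finset.mul_sum]
      push_cast
      exact Finset.sum_congr rfl fun _ _ => Finset.sum_congr rfl fun _ _ => by ring

lemma tendsto_rotateBy {ι : Type*} {l : Filter ι} {A : ι → Matrix (Fin k) (Fin k) ℂ}
    (hA : Tendsto A l (𝓝 1)) (x : ℝ × EuclideanSpace ℂ (Fin k)) :
    Tendsto (fun j => rotateBy (A j) x) l (𝓝 x) := by
  have : Tendsto (fun j => WithLp.toLp 2 (A j *ᵥ x.2)) l
      (𝓝 (WithLp.toLp 2 ((1 : Matrix (Fin k) (Fin k) ℂ) *ᵥ x.2))) :=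
    ((PiLp.continuous_toLp 2 _).tendsto _).comp
      (((continuous_id.matrix_mulVec continuous_const).tendsto _).comp hA)
  simpa [rotateBy] using tendsto_const_nhds.prodMk_nhds this

lemma continuous_eval_sEval (p : MvPolynomial (SVars k) ℝ) :
    Continuous fun x : ℝ × EuclideanSpace ℂ (Fin k) => eval (sEval x) p := by
  refine (continuous_eval p).comp (continuous_pi fun s => ?_)
  rcases s with _ | ⟨i, _ | _⟩
  · exact continuous_fst
  all_goals simp only [sEval, Option.elim, Bool.false_eq_true, if_false, if_true]
  · exact Complex.continuous_im.comp ((PiLp.continuous_apply 2 _ i).comp continuous_snd)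
  · exact Complex.continuous_re.comp ((PiLp.continuous_apply 2 _ i).comp continuous_snd)

section Limits

variable {ι : Type*} {l : Filter ι} {r : ι → ℝ} {y : ι → ℝ × EuclideanSpace ℂ (Fin k)}
  {x : ℝ × EuclideanSpace ℂ (Fin k)} {N : ℕ}

lemma tendsto_inv_pow_mul_eval_monomial_weightedDilation (hr : Tendsto r l (𝓝[>] 0))
    (hy : Tendsto y l (𝓝 x)) {d : SVars k →₀ ℕ} (hd : N ≤ wdeg d) (c : ℝ) :
    Tendsto (fun j => (r j)⁻¹ ^ N * eval (sEval (weightedDilation (r j) (y j))) (monomial d c))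
      l (𝓝 (if wdeg d = N then eval (sEval x) (monomial d c) else 0)) := by
  have hlim : Tendsto (fun j => r j ^ (wdeg d - N) * eval (sEval (y j)) (monomial d c)) l
      (𝓝 (0 ^ (wdeg d - N) * eval (sEval x) (monomial d c))) :=
    ((tendsto_nhdsWithin_iff.mp hr).1.pow _).mul ((continuous_eval_sEval _).tendsto x |>.comp hy)
  have hpos : ∀ᶠ j in l, r j ≠ 0 :=
    (tendsto_nhdsWithin_iff.mp hr).2.mono fun j hj => ne_of_gt hj
  refine (hlim.congr' (hpos.mono fun j hj => ?_)).trans ?_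
  · rw [eval_monomial_weightedDilation, pow_sub₀ _ hj hd, inv_pow]
    ring
  · split_ifs with hN
    · simp [hN]
    · rw [zero_pow (by omega), zero_mul]

lemma tendsto_inv_pow_mul_eval_weightedDilation (hr : Tendsto r l (𝓝[>] 0))
    (hy : Tendsto y l (𝓝 x)) {Q : MvPolynomial (SVars k) ℝ}
    (hmin : ∀ d ∈ Q.support, N ≤ wdeg d) :
    Tendsto (fun j => (r j)⁻¹ ^ N * eval (sEval (weightedDilation (r j) (y j))) Q) l
      (𝓝 (eval (sEval x) (∑ d ∈ Q.support.filter (fun d => wdeg d = N),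
        monomial d (coeff d Q)))) := by
  have hsum : ∀ z, eval z Q = ∑ d ∈ Q.support, eval z (monomial d (coeff d Q)) := fun z => by
    conv_lhs => rw [Q.as_sum]
    rw [map_sum]
  simp only [hsum, Finset.mul_sum, map_sum, Finset.sum_filter, apply_ite (eval (sEval x)),
    map_zero]
  exact tendsto_finsetSum _ fun d hd =>
    tendsto_inv_pow_mul_eval_monomial_weightedDilation hr hy (hmin d hd) _

lemma tendsto_inv_pow_mul_of_isBigO {E : ℝ × EuclideanSpace ℂ (Fin k) → ℝ}
    (hE : E =O[𝓝 0] fun z => ‖z‖ ^ (N + 1)) (hr : Tendsto r l (𝓝[>] 0))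
    (hy : Tendsto y l (𝓝 x)) :
    Tendsto (fun j => (r j)⁻¹ ^ N * E (weightedDilation (r j) (y j))) l (𝓝 0) := by
  set z := fun j => weightedDilation (r j) (y j)
  have hr₀ : Tendsto r l (𝓝 0) := tendsto_nhdsWithin_iff.mp hr |>.1
  have hr_small : ∀ᶠ j in l, 0 < r j ∧ r j ≤ 1 :=
    (tendsto_nhdsWithin_iff.mp hr).2.and (hr₀.eventually (ge_mem_nhds zero_lt_one))
  have hz_le : ∀ᶠ j in l, ‖z j‖ ≤ r j * ‖y j‖ :=
    hr_small.mono fun j hj => norm_weightedDilation_le hj.1.le hj.2 _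
  have hry : Tendsto (fun j => r j * ‖y j‖ ^ (N + 1)) l (𝓝 0) := by
    simpa using hr₀.mul ((continuous_norm.tendsto x).comp hy |>.pow (N + 1))
  have hz : Tendsto z l (𝓝 0) := by
    refine squeeze_zero_norm' hz_le ?_
    simpa using hr₀.mul ((continuous_norm.tendsto x).comp hy)
  refine ((Asymptotics.isBigO_refl (fun j => (r j)⁻¹ ^ N) l).mul
    (hE.comp_tendsto hz)).trans_tendsto (squeeze_zero' ?_ ?_ hry)
  · filter_upwards [hr_small] with j hj
    exact mul_nonneg (pow_nonneg (inv_nonneg.mpr hj.1.le) N) (pow_nonneg (norm_nonneg _) _)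
  · filter_upwards [hr_small, hz_le] with j hj hzj
    have hr_inv : 0 ≤ (r j)⁻¹ ^ N := pow_nonneg (inv_nonneg.mpr hj.1.le) N
    have hr_ne : r j ≠ 0 := hj.1.ne'
    calc (r j)⁻¹ ^ N * ‖z j‖ ^ (N + 1) ≤ (r j)⁻¹ ^ N * (r j * ‖y j‖) ^ (N + 1) := by gcongr
      _ = r j * ‖y j‖ ^ (N + 1) := by
        rw [mul_pow, pow_succ (r j), inv_pow]; field_simp

end Limits

end Dilation

theorem stmt15_general {k : ℕ} (t : ℝ) (ht : 0 < t)
    (U : Matrix (Fin k) (Fin k) ℂ)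
    (N : ℕ)
    (Q : MvPolynomial (SVars k) ℝ)
    (hmin : ∀ d ∈ Q.support, N ≤ wdeg d)
    (h : ℝ × EuclideanSpace ℂ (Fin k) → ℝ)
    (O : Set (ℝ × EuclideanSpace ℂ (Fin k))) (hO : O ∈ nhds 0)
    (C : ℝ)
    (hE : ∀ x ∈ O, |h x - MvPolynomial.eval (sEval x) Q| ≤ C * ‖x‖ ^ (N + 1))
    (nseq : ℕ → ℕ) (hns : Tendsto nseq atTop atTop)
    (hUlim : Tendsto (fun j => U ^ nseq j) atTop (nhds 1))
    (x : ℝ × EuclideanSpace ℂ (Fin k)) :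
    Tendsto (fun j => Real.exp ((N : ℝ) * nseq j * t) * h ((phiMap t U)^[nseq j] x)) atTop
      (nhds (MvPolynomial.eval (sEval x)
        (∑ d ∈ Q.support.filter (fun d => wdeg d = N),
          MvPolynomial.monomial d (MvPolynomial.coeff d Q)))) := by
  set r : ℕ → ℝ := fun j => Real.exp (-t) ^ nseq j
  have hr : Tendsto r atTop (𝓝[>] 0) := by
    refine tendsto_nhdsWithin_iff.mpr ⟨?_, .of_forall fun j => Set.mem_Ioi.mpr (by positivity)⟩
    exact (tendsto_pow_atTop_nhds_zero_of_lt_one (Real.exp_pos _).le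
      (Real.exp_lt_one_iff.mpr (neg_lt_zero.mpr ht))).comp hns
  have hscale : ∀ j, Real.exp ((N : ℝ) * nseq j * t) = (r j)⁻¹ ^ N := fun j => by
    simp only [r, ← Real.exp_nat_mul, ← Real.exp_neg]
    ring_nf
  have hE' : (fun z => h z - eval (sEval z) Q) =O[𝓝 0] fun z => ‖z‖ ^ (N + 1) :=
    .of_bound C (mem_of_superset hO fun z hz => by simpa using hE z hz)
  have hy := tendsto_rotateBy hUlim x
  simpa only [iterate_phiMap, hscale, mul_sub, sub_add_cancel, zero_add] using
    (tendsto_inv_pow_mul_of_isBigO hE' hr hy).add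
      (tendsto_inv_pow_mul_eval_weightedDilation hr hy hmin)

/-- Fix `t > 0`, a unitary `U`, and `N ≥ 1`. Let `h` be real analytic near
`0` on `ℝ × ℂ^k` with Taylor expansion `Σ c_{α,β} v^α w^β` whose degree-`≤ N` truncation is the
polynomial `Q` (so `|h − Q| ≤ C‖·‖^{N+1}` near `0`), all of whose monomials satisfy
`2α + |β| ≥ N`, with `N = min{2α + |β| : c_{α,β} ≠ 0}` attained. Let `P` be the weighted
degree-`N` part of `Q`. If `nⱼ → ∞` with `U^{nⱼ} → Id`, then for every `x = (v, w)`,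
`e^{N nⱼ t} h(φ^{nⱼ}(x)) → P(x)`. -/
theorem stmt15 {k : ℕ} (t : ℝ) (ht : 0 < t)
    (U : Matrix (Fin k) (Fin k) ℂ) (hU : U ∈ Matrix.unitaryGroup (Fin k) ℂ)
    (N : ℕ) (hN : 1 ≤ N)
    (Q : MvPolynomial (SVars k) ℝ)
    (hdeg : Q.totalDegree ≤ N)
    (hmin : ∀ d ∈ Q.support, N ≤ wdeg d)
    (hattained : ∃ d ∈ Q.support, wdeg d = N)
    (h : ℝ × EuclideanSpace ℂ (Fin k) → ℝ)
    (O : Set (ℝ × EuclideanSpace ℂ (Fin k))) (hO : O ∈ nhds 0)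
    (C : ℝ) (hC : 0 < C)
    (hE : ∀ x ∈ O, |h x - MvPolynomial.eval (sEval x) Q| ≤ C * ‖x‖ ^ (N + 1))
    (nseq : ℕ → ℕ) (hns : Tendsto nseq atTop atTop)
    (hUlim : Tendsto (fun j => U ^ nseq j) atTop (nhds 1))
    (x : ℝ × EuclideanSpace ℂ (Fin k)) :
    Tendsto (fun j => Real.exp ((N : ℝ) * nseq j * t) * h ((phiMap t U)^[nseq j] x)) atTop
      (nhds (MvPolynomial.eval (sEval x)
        (∑ d ∈ Q.support.filter (fun d => wdeg d = N),
          MvPolynomial.monomial d (MvPolynomial.coeff d Q)))) :=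
  stmt15_general t ht U N Q hmin h O hO C hE nseq hns hUlim x
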